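/- arXiv:1710.03607 — 2 statements merged into one kernel-verified Lean document; each statement's English description precedes it below -/
import Mathlib

section
/- Let f, g : I → ℝ be C³ on the open interval I with nonvanishing Wronskian, and let D(x,y) := f(x)g(y) − f(y)g(x). Then for all x ∈ I, ∂₁³D(x,x)/∂₁D(x,x) = Φ'_{f,g}(x) + Φ_{f,g}(x)² + Ψ_{f,g}(x), where Φ_{f,g}(x) := ∂₁²D(x,x)/∂₁D(x,x) and Ψ_{f,g}(x) := −∂₁²∂₂D(x,x)/∂₁D(x,x). -/
/-!
Writing `W x := ∂₁D(x,x)` and `A x := ∂₁²D(x,x)`, we have `Φ = A / W`. Since `D` is a sum of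
products `p x * q y`, its partial derivatives are again of this form, and the derivative of a
diagonal `x ↦ E(x,x)` is `∂₁E(x,x) + ∂₂E(x,x)`. Hence `W' = A + ∂₂∂₁D(x,x) = A`, because
`∂₂∂₁D(x,x) = f'(x)g'(x) - f'(x)g'(x)`, and `A' = ∂₁³D(x,x) - Ψ W`. The Riccati identity
`(A/W)' + (A/W)² = A'/W`, valid whenever `W' = A`, then gives the formula.
-/

/-- Partial derivative of a two-variable real function in its first variable. -/
noncomputable def pd1 (D : ℝ → ℝ → ℝ) : ℝ → ℝ → ℝ := fun x y => deriv (fun u => D u y) x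

/-- Partial derivative of a two-variable real function in its second variable. -/
noncomputable def pd2 (D : ℝ → ℝ → ℝ) : ℝ → ℝ → ℝ := fun x y => deriv (fun v => D x v) y

open Filter Topology

theorem HasDerivAt.div_riccati {W A : ℝ → ℝ} {x B : ℝ}
    (hW : HasDerivAt W (A x) x) (hA : HasDerivAt A B x) (hWx : W x ≠ 0) :
    HasDerivAt (fun u => A u / W u) (B / W x - (A x / W x) ^ 2) x := by
  refine (hA.div hW hWx).congr_deriv ?_
  field_simp

section Wronskian

variable {U : Set ℝ} {f g : ℝ → ℝ} {D : ℝ → ℝ → ℝ} {n : ℕ}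

theorem ContDiffOn.differentiableAt_iterate_deriv (hU : IsOpen U) (hf : ContDiffOn ℝ n f U)
    {k : ℕ} (hk : k < n) {x : ℝ} (hx : x ∈ U) : DifferentiableAt ℝ (deriv^[k] f) x := by
  induction k generalizing f n with
  | zero =>
    exact (hf.differentiableOn (by exact_mod_cast hk.ne')).differentiableAt (hU.mem_nhds hx)
  | succ k ih =>
    cases n with
    | zero => omega
    | succ m =>
      rw [Function.iterate_succ_apply]
      exact ih (hf.deriv_of_isOpen hU (m := m) (by norm_cast)) (by omega)

theorem pd1_iterate_apply (hU : IsOpen U) (hf : ContDiffOn ℝ n f U) (hg : ContDiffOn ℝ n g U)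
    (hD : ∀ x y, D x y = f x * g y - f y * g x) {k : ℕ} (hk : k ≤ n) {x : ℝ} (hx : x ∈ U)
    (y : ℝ) : pd1^[k] D x y = deriv^[k] f x * g y - f y * deriv^[k] g x := by
  induction k generalizing x with
  | zero => exact hD x y
  | succ k ih =>
    have hE : (fun u => pd1^[k] D u y) =ᶠ[𝓝 x]
        fun u => deriv^[k] f u * g y - f y * deriv^[k] g u := by
      filter_upwards [hU.mem_nhds hx] with u hu using ih (by omega) hu
    have hfk := hf.differentiableAt_iterate_deriv hU (by omega : k < n) hx
    have hgk := hg.differentiableAt_iterate_deriv hU (by omega : k < n) hx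
    rw [Function.iterate_succ_apply', pd1, hE.deriv_eq, deriv_fun_sub (hfk.mul_const _)
      (hgk.const_mul _), deriv_mul_const hfk, deriv_const_mul _ hgk,
      Function.iterate_succ_apply', Function.iterate_succ_apply']

theorem pd2_pd1_iterate_apply_self (hU : IsOpen U) (hf : ContDiffOn ℝ n f U)
    (hg : ContDiffOn ℝ n g U) (hD : ∀ x y, D x y = f x * g y - f y * g x) {k : ℕ} (hk : k ≤ n)
    (hn : n ≠ 0) {x : ℝ} (hx : x ∈ U) :
    pd2 (pd1^[k] D) x x = deriv^[k] f x * deriv g x - deriv f x * deriv^[k] g x := by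
  have hf0 : DifferentiableAt ℝ f x := hf.differentiableAt_iterate_deriv hU (k := 0) (by omega) hx
  have hg0 : DifferentiableAt ℝ g x := hg.differentiableAt_iterate_deriv hU (k := 0) (by omega) hx
  have hE : (fun v => pd1^[k] D x v) = fun v => deriv^[k] f x * g v - f v * deriv^[k] g x :=
    funext (pd1_iterate_apply hU hf hg hD hk hx)
  rw [pd2, hE, deriv_fun_sub (hg0.const_mul _) (hf0.mul_const _), deriv_const_mul _ hg0,
    deriv_mul_const hf0]

theorem hasDerivAt_pd1_iterate_apply_self (hU : IsOpen U) (hf : ContDiffOn ℝ n f U)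
    (hg : ContDiffOn ℝ n g U) (hD : ∀ x y, D x y = f x * g y - f y * g x) {k : ℕ} (hk : k < n)
    {x : ℝ} (hx : x ∈ U) :
    HasDerivAt (fun u => pd1^[k] D u u) (pd1^[k + 1] D x x + pd2 (pd1^[k] D) x x) x := by
  have hE : (fun u => pd1^[k] D u u) =ᶠ[𝓝 x]
      fun u => deriv^[k] f u * g u - f u * deriv^[k] g u := by
    filter_upwards [hU.mem_nhds hx] with u hu using pd1_iterate_apply hU hf hg hD hk.le hu u
  have hfk := hf.differentiableAt_iterate_deriv hU hk hx
  have hgk := hg.differentiableAt_iterate_deriv hU hk hx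
  have hf0 : DifferentiableAt ℝ f x := hf.differentiableAt_iterate_deriv hU (k := 0) (by omega) hx
  have hg0 : DifferentiableAt ℝ g x := hg.differentiableAt_iterate_deriv hU (k := 0) (by omega) hx
  rw [pd1_iterate_apply hU hf hg hD hk hx, pd2_pd1_iterate_apply_self hU hf hg hD hk.le
    (by omega) hx, Function.iterate_succ_apply', Function.iterate_succ_apply']
  refine (((hfk.hasDerivAt.mul hg0.hasDerivAt).sub
    (hf0.hasDerivAt.mul hgk.hasDerivAt)).congr_of_eventuallyEq hE).congr_deriv ?_
  ring

end Wronskian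

theorem third_diagonal_derivative_formula_general
    (I : Set ℝ) (hIopen : IsOpen I)
    (f g : ℝ → ℝ) (hf3 : ContDiffOn ℝ 3 f I) (hg3 : ContDiffOn ℝ 3 g I)
    (D : ℝ → ℝ → ℝ) (hD : ∀ x y, D x y = f x * g y - f y * g x)
    (hW : ∀ x ∈ I, pd1 D x x ≠ 0)
    (Φ Ψ : ℝ → ℝ)
    (hΦ : ∀ x ∈ I, Φ x = pd1 (pd1 D) x x / pd1 D x x)
    (hΨ : ∀ x ∈ I, Ψ x = -(pd2 (pd1 (pd1 D)) x x / pd1 D x x)) :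
    ∀ x ∈ I, pd1 (pd1 (pd1 D)) x x / pd1 D x x = deriv Φ x + (Φ x) ^ 2 + Ψ x := by
  intro x hx
  have hW' := hasDerivAt_pd1_iterate_apply_self (n := 3) hIopen hf3 hg3 hD (k := 1) (by norm_num) hx
  have hA' := hasDerivAt_pd1_iterate_apply_self (n := 3) hIopen hf3 hg3 hD (k := 2) (by norm_num) hx
  have hpd21 : pd2 (pd1 D) x x = 0 := by
    rw [show pd1 D = pd1^[1] D from rfl,
      pd2_pd1_iterate_apply_self (n := 3) hIopen hf3 hg3 hD (by norm_num) (by norm_num) hx]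
    simp only [Function.iterate_one, sub_self]
  simp only [Function.iterate_succ, Function.iterate_zero, Function.comp_apply, id, hpd21,
    add_zero] at hW' hA'
  have hΦ' := (hW'.div_riccati (A := fun u => pd1 (pd1 D) u u) hA' (hW x hx))
    |>.congr_of_eventuallyEq (eventually_of_mem (hIopen.mem_nhds hx) hΦ)
  rw [hΦ'.deriv, hΦ x hx, hΨ x hx]
  ring

theorem third_diagonal_derivative_formula
    (I : Set ℝ) (hIne : I.Nonempty) (hIopen : IsOpen I) (hIconn : I.OrdConnected)
    (f g : ℝ → ℝ) (hf3 : ContDiffOn ℝ 3 f I) (hg3 : ContDiffOn ℝ 3 g I)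
    (D : ℝ → ℝ → ℝ) (hD : ∀ x y, D x y = f x * g y - f y * g x)
    (hW : ∀ x ∈ I, pd1 D x x ≠ 0)
    (Φ Ψ : ℝ → ℝ)
    (hΦ : ∀ x ∈ I, Φ x = pd1 (pd1 D) x x / pd1 D x x)
    (hΨ : ∀ x ∈ I, Ψ x = -(pd2 (pd1 (pd1 D)) x x / pd1 D x x)) :
    ∀ x ∈ I, pd1 (pd1 (pd1 D)) x x / pd1 D x x = deriv Φ x + (Φ x) ^ 2 + Ψ x :=
  third_diagonal_derivative_formula_general I hIopen f g hf3 hg3 D hD hW Φ Ψ hΦ hΨ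
end

section
/- Let I ⊆ (0,∞) be an open interval, a, b ∈ ℝ with b ≠ 0, and set f(x) = x^a·sin(b·log x), g(x) = x^a·cos(b·log x). Then for all x, y ∈ I, f(x)g(y) − f(y)g(x) = x^a·y^a·sin(b·log(x/y)). Consequently (f,g) is a Chebyshev system on I if and only if the interval I/I := {u/v : u,v ∈ I} is contained in (exp(−π/|b|), exp(π/|b|)). -/
theorem sin_log_chebyshev_characterization
    (I : Set ℝ) (hIne : I.Nonempty) (hIopen : IsOpen I) (hIconn : I.OrdConnected)
    (hIpos : I ⊆ Set.Ioi (0 : ℝ)) (a b : ℝ) (hb : b ≠ 0)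
    (f g : ℝ → ℝ)
    (hf : ∀ x ∈ I, f x = x ^ a * Real.sin (b * Real.log x))
    (hg : ∀ x ∈ I, g x = x ^ a * Real.cos (b * Real.log x)) :
    (∀ x ∈ I, ∀ y ∈ I,
      f x * g y - f y * g x = x ^ a * y ^ a * Real.sin (b * Real.log (x / y))) ∧
    ((∀ x ∈ I, ∀ y ∈ I, x ≠ y → f x * g y - f y * g x ≠ 0) ↔
      (∀ u ∈ I, ∀ v ∈ I,
        u / v ∈ Set.Ioo (Real.exp (-(Real.pi / |b|))) (Real.exp (Real.pi / |b|)))) := by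
  have hbabs : (0:ℝ) < |b| := abs_pos.mpr hb
  have hcpos : (0:ℝ) < Real.pi / |b| := div_pos Real.pi_pos hbabs
  have key : ∀ x ∈ I, ∀ y ∈ I,
      f x * g y - f y * g x = x ^ a * y ^ a * Real.sin (b * Real.log (x / y)) := by
    intro x hx y hy
    have hx0 : (0:ℝ) < x := hIpos hx
    have hy0 : (0:ℝ) < y := hIpos hy
    rw [hf x hx, hg y hy, hf y hy, hg x hx, Real.log_div hx0.ne' hy0.ne',
      mul_sub, Real.sin_sub]
    ring
  refine ⟨key, ?_, ?_⟩
  · -- Chebyshev → ratios in Ioo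
    intro h u hu v hv
    have hu0 : (0:ℝ) < u := hIpos hu
    have hv0 : (0:ℝ) < v := hIpos hv
    by_cases huv : u = v
    · subst huv
      rw [div_self hu0.ne']
      constructor
      · calc Real.exp (-(Real.pi / |b|)) < Real.exp 0 := Real.exp_lt_exp.mpr (by linarith)
          _ = 1 := Real.exp_zero
      · calc (1:ℝ) = Real.exp 0 := Real.exp_zero.symm
          _ < Real.exp (Real.pi / |b|) := Real.exp_lt_exp.mpr (by linarith)
    · by_contra hnot
      set φ : ℝ → ℝ := fun t => b * (Real.log t - Real.log v) with hφ
      have hφv : φ v = 0 := by simp [hφ]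
      have habs : Real.pi ≤ |φ u| := by
        have hlog : Real.pi / |b| ≤ |Real.log u - Real.log v| := by
          have hnot' : ¬(Real.exp (-(Real.pi / |b|)) < u / v ∧
              u / v < Real.exp (Real.pi / |b|)) := fun hp => hnot (Set.mem_Ioo.mpr hp)
          rcases not_and_or.mp hnot' with h1 | h1
          · have h2 : u / v ≤ Real.exp (-(Real.pi / |b|)) := le_of_not_gt h1
            have h3 : Real.log (u / v) ≤ -(Real.pi / |b|) := by
              calc Real.log (u / v) ≤ Real.log (Real.exp (-(Real.pi / |b|))) :=
                    Real.log_le_log (div_pos hu0 hv0) h2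
                _ = -(Real.pi / |b|) := Real.log_exp _
            rw [Real.log_div hu0.ne' hv0.ne'] at h3
            calc Real.pi / |b| ≤ -(Real.log u - Real.log v) := by linarith
              _ ≤ |Real.log u - Real.log v| := neg_le_abs _
          · have h2 : Real.exp (Real.pi / |b|) ≤ u / v := le_of_not_gt h1
            have h3 : Real.pi / |b| ≤ Real.log (u / v) := by
              calc Real.pi / |b| = Real.log (Real.exp (Real.pi / |b|)) := (Real.log_exp _).symm
                _ ≤ Real.log (u / v) := Real.log_le_log (Real.exp_pos _) h2
            rw [Real.log_div hu0.ne' hv0.ne'] at h3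
            exact h3.trans (le_abs_self _)
        have : Real.pi = |b| * (Real.pi / |b|) := (mul_div_cancel₀ _ hbabs.ne').symm
        rw [this, hφ]
        simp only [abs_mul]
        exact mul_le_mul_of_nonneg_left hlog (abs_nonneg _)
      set c0 : ℝ := if 0 ≤ φ u then Real.pi else -Real.pi with hc0
      have hmem : c0 ∈ Set.uIcc (φ v) (φ u) := by
        rw [hφv, hc0]
        split_ifs with hs
        · rw [Set.uIcc_of_le hs]
          exact ⟨Real.pi_pos.le, by rwa [abs_of_nonneg hs] at habs⟩
        · push_neg at hs
          rw [Set.uIcc_of_ge hs.le]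
          refine ⟨?_, by linarith [Real.pi_pos]⟩
          rw [abs_of_neg hs] at habs; linarith
      have hsubI : Set.uIcc v u ⊆ I := hIconn.uIcc_subset hv hu
      have hcont : ContinuousOn φ (Set.uIcc v u) := by
        apply continuousOn_const.mul
        apply ContinuousOn.sub _ continuousOn_const
        apply Real.continuousOn_log.mono
        intro t ht
        exact (ne_of_gt (hIpos (hsubI ht)))
      obtain ⟨t, ht, hφt⟩ := intermediate_value_uIcc hcont hmem
      have htI : t ∈ I := hsubI ht
      have ht0 : (0:ℝ) < t := hIpos htI
      have htv : t ≠ v := by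
        intro hteq
        rw [hteq, hφv, hc0] at hφt
        split_ifs at hφt <;> [exact Real.pi_ne_zero hφt.symm;
          exact Real.pi_ne_zero (neg_eq_zero.mp hφt.symm)]
      apply h t htI v hv htv
      rw [key t htI v hv, Real.log_div ht0.ne' hv0.ne']
      have : b * (Real.log t - Real.log v) = c0 := hφt
      rw [this, hc0]
      split_ifs <;> simp [Real.sin_pi]
  · -- ratios in Ioo → Chebyshev
    intro h x hx y hy hxy
    have hx0 : (0:ℝ) < x := hIpos hx
    have hy0 : (0:ℝ) < y := hIpos hy
    rw [key x hx y hy]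
    have hmem := h x hx y hy
    have h1 : -(Real.pi / |b|) < Real.log (x / y) := by
      have := Real.log_lt_log (Real.exp_pos _) hmem.1
      rwa [Real.log_exp] at this
    have h2 : Real.log (x / y) < Real.pi / |b| := by
      have := Real.log_lt_log (div_pos hx0 hy0) hmem.2
      rwa [Real.log_exp] at this
    have hLne : Real.log (x / y) ≠ 0 := by
      intro h0
      have : x / y = 1 := by
        have := Real.exp_log (div_pos hx0 hy0)
        rw [h0, Real.exp_zero] at this
        exact this.symm
      exact hxy (div_eq_one_iff_eq hy0.ne' |>.mp this)
    have habslt : |b * Real.log (x / y)| < Real.pi := by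
      rw [abs_mul]
      calc |b| * |Real.log (x / y)| < |b| * (Real.pi / |b|) :=
            mul_lt_mul_of_pos_left (abs_lt.mpr ⟨h1, h2⟩) hbabs
        _ = Real.pi := mul_div_cancel₀ _ hbabs.ne'
    have hbound := abs_lt.mp habslt
    have hsin : Real.sin (b * Real.log (x / y)) ≠ 0 := by
      intro h0
      have := (Real.sin_eq_zero_iff_of_lt_of_lt hbound.1 hbound.2).mp h0
      exact hLne (by
        rcases mul_eq_zero.mp this with hb' | hL
        · exact absurd hb' hb
        · exact hL)
    positivity
end
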